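/- The robustness of Buscemi nonlocality is monotone under quantum simulation: if M and M' are distributed measurements in R_BN and M ≻_q M' (M' can be quantum-simulated from M), then RoBN(M') ≤ RoBN(M). -/

import Mathlib

open Matrix BigOperators Kronecker ComplexOrder

noncomputable section

/-- Square complex matrices of size `n`. -/
abbrev Mat (n : ℕ) : Type := Matrix (Fin n) (Fin n) ℂ

/-- Bipartite complex matrices on `ℂ^m ⊗ ℂ^n`. -/
abbrev BMat (m n : ℕ) : Type := Matrix (Fin m × Fin n) (Fin m × Fin n) ℂ

/-- A density matrix: positive semidefinite with unit trace. -/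
def IsDensity {n : Type} [Fintype n] (ρ : Matrix n n ℂ) : Prop :=
  ρ.PosSemidef ∧ ρ.trace = 1

/-- A POVM: a finite family of positive semidefinite matrices summing to the identity. -/
def IsPOVM {ι n : Type} [Fintype ι] [Fintype n] [DecidableEq n]
    (M : ι → Matrix n n ℂ) : Prop :=
  (∀ i, (M i).PosSemidef) ∧ ∑ i, M i = 1

/-- A separable bipartite operator: a finite convex combination of products of
density matrices. -/
def SepState {dA dB : ℕ} (ρ : BMat dA dB) : Prop :=
  ∃ (n : ℕ) (p : Fin n → ℝ) (ρA : Fin n → Mat dA) (ρB : Fin n → Mat dB),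
    (∀ l, 0 ≤ p l) ∧ (∑ l, p l = 1) ∧
    (∀ l, IsDensity (ρA l)) ∧ (∀ l, IsDensity (ρB l)) ∧
    ρ = ∑ l, (p l : ℂ) • (ρA l ⊗ₖ ρB l)

/-- The element `tr_{A'B'}[(Ma ⊗ Mb)(1^A ⊗ ρ^{A'B'} ⊗ 1^B)]` of a distributed
measurement (written out entrywise, after the canonical reordering of tensor factors). -/
def distMeas {dA dA' dB' dB : ℕ}
    (Ma : Matrix (Fin dA × Fin dA') (Fin dA × Fin dA') ℂ)
    (Mb : Matrix (Fin dB' × Fin dB) (Fin dB' × Fin dB) ℂ)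
    (ρ : BMat dA' dB') : BMat dA dB :=
  Matrix.of fun pq rs =>
    ∑ k : Fin dA', ∑ l : Fin dB', ∑ k' : Fin dA', ∑ l' : Fin dB',
      Ma (pq.1, k) (rs.1, k') * Mb (l, pq.2) (l', rs.2) * ρ (k', l') (k, l)

/-- Membership in `R_BN`: the family arises from local POVMs and a shared state. -/
def MemRBN {dA dB oA oB : ℕ} (M : Fin oA → Fin oB → BMat dA dB) : Prop :=
  ∃ (dA' dB' : ℕ)
    (Ma : Fin oA → Matrix (Fin dA × Fin dA') (Fin dA × Fin dA') ℂ)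
    (Mb : Fin oB → Matrix (Fin dB' × Fin dB) (Fin dB' × Fin dB) ℂ)
    (ρ : BMat dA' dB'),
    IsPOVM Ma ∧ IsPOVM Mb ∧ IsDensity ρ ∧
    ∀ a b, M a b = distMeas (Ma a) (Mb b) ρ

/-- Membership in `F_BN`: the family arises from local POVMs and a separable shared state. -/
def MemFBN {dA dB oA oB : ℕ} (M : Fin oA → Fin oB → BMat dA dB) : Prop :=
  ∃ (dA' dB' : ℕ)
    (Ma : Fin oA → Matrix (Fin dA × Fin dA') (Fin dA × Fin dA') ℂ)
    (Mb : Fin oB → Matrix (Fin dB' × Fin dB) (Fin dB' × Fin dB) ℂ)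
    (ρ : BMat dA' dB'),
    IsPOVM Ma ∧ IsPOVM Mb ∧ IsDensity ρ ∧ SepState ρ ∧
    ∀ a b, M a b = distMeas (Ma a) (Mb b) ρ

/-- Robustness of Buscemi nonlocality. -/
def RoBN {dA dB oA oB : ℕ} (M : Fin oA → Fin oB → BMat dA dB) : ℝ :=
  sInf { r : ℝ | 0 ≤ r ∧ ∃ (N O : Fin oA → Fin oB → BMat dA dB),
    MemRBN N ∧ MemFBN O ∧
    ∀ a b, M a b + (r : ℂ) • N a b = ((1 + r : ℝ) : ℂ) • O a b }

/-- Quantum simulation of a distributed measurement: shared randomness, local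
pre-processing channels (given by Kraus operators) in the Heisenberg picture,
and classical post-processing of outcomes. -/
def Simulates {dA dB oA oB oA' oB' : ℕ}
    (M : Fin oA → Fin oB → BMat dA dB)
    (M' : Fin oA' → Fin oB' → BMat dA dB) : Prop :=
  ∃ (nL : ℕ) (pL : Fin nL → ℝ)
    (pA : Fin oA' → Fin oA → Fin nL → ℝ)
    (pB : Fin oB' → Fin oB → Fin nL → ℝ)
    (kE : Fin nL → ℕ) (KE : (l : Fin nL) → Fin (kE l) → Mat dA)
    (kN : Fin nL → ℕ) (KN : (l : Fin nL) → Fin (kN l) → Mat dB),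
    (∀ l, 0 ≤ pL l) ∧ (∑ l, pL l = 1) ∧
    (∀ a i l, 0 ≤ pA a i l) ∧ (∀ i l, ∑ a, pA a i l = 1) ∧
    (∀ b j l, 0 ≤ pB b j l) ∧ (∀ j l, ∑ b, pB b j l = 1) ∧
    (∀ l, ∑ s : Fin (kE l), (KE l s)ᴴ * KE l s = 1) ∧
    (∀ l, ∑ t : Fin (kN l), (KN l t)ᴴ * KN l t = 1) ∧
    ∀ a b, M' a b = ∑ l : Fin nL, ∑ i : Fin oA, ∑ j : Fin oB,
      ((pL l * pA a i l * pB b j l : ℝ) : ℂ) •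
        ∑ s : Fin (kE l), ∑ t : Fin (kN l),
          (KE l s ⊗ₖ KN l t)ᴴ * M i j * (KE l s ⊗ₖ KN l t)

/-- An ensemble of bipartite states: a probability distribution together with
density matrices. -/
def IsEnsemble {dA dB oA oB : ℕ} (p : Fin oA → Fin oB → ℝ)
    (σ : Fin oA → Fin oB → BMat dA dB) : Prop :=
  (∀ x y, 0 ≤ p x y) ∧ (∑ x, ∑ y, p x y = 1) ∧ ∀ x y, IsDensity (σ x y)

/-- Guessing probability in distributed state discrimination with a distributed
measurement `M`. -/
def pDSD {dA dB oA oB : ℕ} (p : Fin oA → Fin oB → ℝ)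
    (σ : Fin oA → Fin oB → BMat dA dB)
    (M : Fin oA → Fin oB → BMat dA dB) : ℝ :=
  sSup { v : ℝ | ∃ N : Fin oA → Fin oB → BMat dA dB, Simulates M N ∧
    v = ∑ x : Fin oA, ∑ y : Fin oB, p x y * ((N x y * σ x y).trace).re }

/-- Classical value of distributed state discrimination. -/
def pDSDc {dA dB oA oB : ℕ} (p : Fin oA → Fin oB → ℝ)
    (σ : Fin oA → Fin oB → BMat dA dB) : ℝ :=
  sSup { v : ℝ | ∃ N : Fin oA → Fin oB → BMat dA dB, MemFBN N ∧ v = pDSD p σ N }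

/-- The subchannel `ω ↦ tr_{AA'}[(Ma ⊗ 1^{B'})(ω ⊗ ρ^{A'B'})]` of a teleportation
instrument (written out entrywise). -/
def telep {dA dA' dB' : ℕ}
    (Ma : Matrix (Fin dA × Fin dA') (Fin dA × Fin dA') ℂ)
    (ρ : BMat dA' dB') (ω : Mat dA) : Mat dB' :=
  Matrix.of fun l l' =>
    ∑ i : Fin dA, ∑ k : Fin dA', ∑ i' : Fin dA, ∑ k' : Fin dA',
      Ma (i, k) (i', k') * ω i' i * ρ (k', l) (k, l')

/-- Membership in `R_T`: the instrument is a teleportation instrument. -/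
def MemRT {dA dB' oA : ℕ} (Λ : Fin oA → Mat dA → Mat dB') : Prop :=
  ∃ (dA' : ℕ) (Ma : Fin oA → Matrix (Fin dA × Fin dA') (Fin dA × Fin dA') ℂ)
    (ρ : BMat dA' dB'),
    IsPOVM Ma ∧ IsDensity ρ ∧ ∀ a ω, Λ a ω = telep (Ma a) ρ ω

/-- Membership in `F_T`: a teleportation instrument realizable with a separable state. -/
def MemFT {dA dB' oA : ℕ} (Λ : Fin oA → Mat dA → Mat dB') : Prop :=
  ∃ (dA' : ℕ) (Ma : Fin oA → Matrix (Fin dA × Fin dA') (Fin dA × Fin dA') ℂ)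
    (ρ : BMat dA' dB'),
    IsPOVM Ma ∧ IsDensity ρ ∧ SepState ρ ∧ ∀ a ω, Λ a ω = telep (Ma a) ρ ω

/-- Robustness of teleportation. -/
def RoT {dA dB' oA : ℕ} (Λ : Fin oA → Mat dA → Mat dB') : ℝ :=
  sInf { r : ℝ | 0 ≤ r ∧ ∃ (Ω Γ : Fin oA → Mat dA → Mat dB'),
    MemRT Ω ∧ MemFT Γ ∧
    ∀ a ω, Λ a ω + (r : ℂ) • Ω a ω = ((1 + r : ℝ) : ℂ) • Γ a ω }

/-- Quantum simulation of a teleportation instrument: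
`Φ_a = Σ_{i,λ} p(λ) p(a|i,λ) E_λ ∘ Λ_i ∘ N_λ` with channels given by Kraus operators. -/
def SimInstr {dA dB' o o' : ℕ} (Λ : Fin o → Mat dA → Mat dB')
    (Φ : Fin o' → Mat dA → Mat dB') : Prop :=
  ∃ (nL : ℕ) (pL : Fin nL → ℝ) (pA : Fin o' → Fin o → Fin nL → ℝ)
    (kN : Fin nL → ℕ) (KN : (l : Fin nL) → Fin (kN l) → Mat dA)
    (kE : Fin nL → ℕ) (KE : (l : Fin nL) → Fin (kE l) → Mat dB'),
    (∀ l, 0 ≤ pL l) ∧ (∑ l, pL l = 1) ∧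
    (∀ a i l, 0 ≤ pA a i l) ∧ (∀ i l, ∑ a, pA a i l = 1) ∧
    (∀ l, ∑ s : Fin (kN l), (KN l s)ᴴ * KN l s = 1) ∧
    (∀ l, ∑ t : Fin (kE l), (KE l t)ᴴ * KE l t = 1) ∧
    ∀ a ω, Φ a ω = ∑ l : Fin nL, ∑ i : Fin o,
      ((pL l * pA a i l : ℝ) : ℂ) •
        ∑ t : Fin (kE l),
          KE l t * Λ i (∑ s : Fin (kN l), KN l s * ω * (KN l s)ᴴ) * (KE l t)ᴴ

/-- `(Φ ⊗ id^B)[σ]` for a map `Φ` acting on the first tensor factor. -/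
def appFst {dA dB' dB : ℕ} (Φ : Mat dA → Mat dB') (σ : BMat dA dB) : BMat dB' dB :=
  Matrix.of fun pq rs =>
    Φ (Matrix.of fun i i' => σ (i, pq.2) (i', rs.2)) pq.1 rs.1

/-- Guessing probability in teleportation-assisted state discrimination with
instrument `Λ`. -/
def pTSD {dA dB' o dB oA oB : ℕ} (p : Fin oA → Fin oB → ℝ)
    (σ : Fin oA → Fin oB → BMat dA dB)
    (Λ : Fin o → Mat dA → Mat dB') : ℝ :=
  sSup { v : ℝ | ∃ (Mb : Fin oB → Matrix (Fin dB' × Fin dB) (Fin dB' × Fin dB) ℂ)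
      (Φ : Fin oA → Mat dA → Mat dB'),
    IsPOVM Mb ∧ SimInstr Λ Φ ∧
    v = ∑ x : Fin oA, ∑ y : Fin oB,
      p x y * ((Mb y * appFst (Φ x) (σ x y)).trace).re }

/-- Classical value of teleportation-assisted state discrimination. -/
def pTSDc (dB' : ℕ) {dA dB oA oB : ℕ} (p : Fin oA → Fin oB → ℝ)
    (σ : Fin oA → Fin oB → BMat dA dB) : ℝ :=
  sSup { v : ℝ | ∃ (o' : ℕ) (F : Fin o' → Mat dA → Mat dB'),
    MemFT F ∧ v = pTSD p σ F }

/-- Generalized robustness of entanglement. -/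
def RoE {dA dB : ℕ} (ρ : BMat dA dB) : ℝ :=
  sInf { r : ℝ | 0 ≤ r ∧ ∃ (η σ : BMat dA dB),
    IsDensity η ∧ IsDensity σ ∧ SepState σ ∧
    ρ + (r : ℂ) • η = ((1 + r : ℝ) : ℂ) • σ }

/-- Guessing probability in entanglement-assisted state discrimination with
shared state `ρ`. -/
def pESD {dA dB oA oB dA' dB' : ℕ} (p : Fin oA → Fin oB → ℝ)
    (σ : Fin oA → Fin oB → BMat dA dB) (ρ : BMat dA' dB') : ℝ :=
  sSup { v : ℝ | ∃ (Ma : Fin oA → Matrix (Fin dA × Fin dA') (Fin dA × Fin dA') ℂ)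
      (Mb : Fin oB → Matrix (Fin dB' × Fin dB) (Fin dB' × Fin dB) ℂ),
    IsPOVM Ma ∧ IsPOVM Mb ∧
    v = ∑ x : Fin oA, ∑ y : Fin oB,
      p x y * ((distMeas (Ma x) (Mb y) ρ * σ x y).trace).re }

/-- Classical value of entanglement-assisted state discrimination. -/
def pESDc {dA dB oA oB : ℕ} (p : Fin oA → Fin oB → ℝ)
    (σ : Fin oA → Fin oB → BMat dA dB) : ℝ :=
  sSup { v : ℝ | ∃ (dA' dB' : ℕ) (ρ : BMat dA' dB'),
    IsDensity ρ ∧ SepState ρ ∧ v = pESD p σ ρ }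

/-- Partial trace over the second tensor factor. -/
def ptraceSnd {m n : Type} [Fintype n] (M : Matrix (m × n) (m × n) ℂ) : Matrix m m ℂ :=
  Matrix.of fun i j => ∑ k : n, M (i, k) (j, k)

/-- Partial trace over the first tensor factor. -/
def ptraceFst {m n : Type} [Fintype m] (M : Matrix (m × n) (m × n) ℂ) : Matrix n n ℂ :=
  Matrix.of fun i j => ∑ k : m, M (k, i) (k, j)

/-- Average score in a general no-signalling game with scoring function `V`. -/
def pV {dA dB oA oB nX nY : ℕ} (p : Fin nX → Fin nY → ℝ)
    (σ : Fin nX → Fin nY → BMat dA dB)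
    (V : Fin oA → Fin oB → Fin nX → Fin nY → ℝ)
    (M : Fin oA → Fin oB → BMat dA dB) : ℝ :=
  ∑ a : Fin oA, ∑ b : Fin oB, ∑ x : Fin nX, ∑ y : Fin nY,
    p x y * ((M a b * σ x y).trace).re * V a b x y

/-- Min-accessible information of a channel, with base-2 logarithms. -/
def IaccMin {dA dB : ℕ} {out : Type} [Fintype out] [DecidableEq out]
    (N : BMat dA dB → Matrix out out ℂ) : ℝ :=
  sSup { v : ℝ | ∃ (n m : ℕ) (p : Fin n → ℝ) (σ : Fin n → BMat dA dB)
      (D : Fin m → Matrix out out ℂ),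
    (∀ x, 0 ≤ p x) ∧ (∑ x, p x = 1) ∧ (∀ x, IsDensity (σ x)) ∧ IsPOVM D ∧
    v = Real.logb 2 (∑ g : Fin m, ⨆ x : Fin n, p x * ((N (σ x) * D g).trace).re)
      - Real.logb 2 (⨆ x : Fin n, p x) }

/-!
A quantum simulation acts on families of operators through a linear map `Φ` with `M' = Φ M`, so
it carries a decomposition `M + r N = (1 + r) O` with `N ∈ R_BN`, `O ∈ F_BN` to
`M' + r Φ N = (1 + r) Φ O`. It therefore suffices that `Φ` maps `R_BN` into `R_BN` and `F_BN` into
`F_BN`. In the Heisenberg picture the local channels and the classical post-processing are absorbed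
into the local POVMs, because conjugating the POVMs by Kraus operators conjugates
`tr_{A'B'}[(M_a ⊗ M_b)(1 ⊗ ρ ⊗ 1)]` by their tensor product. The shared randomness `λ` is absorbed
into the shared state: both ancillas are enlarged to `nL` orthogonal blocks, the new state carries
`p(λ) ρ` in block `(λ, λ)`, and each party runs its `λ`-th strategy on block `λ`; this state is
separable whenever `ρ` is. Finally, the infimum defining `RoBN M` is over a nonempty set: with `σ`
maximally mixed on a `d`-dimensional ancilla, `ρ + d η = (1 + d) σ` for the state
`η = (σ + (1 - ρ)) / d`, which is positive since `ρ ≤ 1`.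
-/

lemma IsDensity.posSemidef_one_sub {n : Type} [Fintype n] [DecidableEq n] {ρ : Matrix n n ℂ}
    (hρ : IsDensity ρ) : (1 - ρ).PosSemidef := by
  obtain ⟨hpsd, htr⟩ := hρ
  have hH := hpsd.isHermitian
  have hsum : ∑ j, hH.eigenvalues j = 1 := by
    simpa using congrArg Complex.re (hH.trace_eq_sum_eigenvalues.symm.trans htr)
  rw [hH.spectral_theorem, ← map_one (Unitary.conjStarAlgAut ℂ _ hH.eigenvectorUnitary),
    ← map_sub, Unitary.conjStarAlgAut_apply, ← diagonal_one, diagonal_sub]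
  refine (posSemidef_diagonal_iff.2 fun i => ?_).mul_mul_conjTranspose_same _
  have := hsum ▸ Finset.single_le_sum (fun j _ => hpsd.eigenvalues_nonneg j) (Finset.mem_univ i)
  simpa [← Complex.ofReal_one, ← Complex.ofReal_sub] using this

lemma IsDensity.conj {n m : Type} [Fintype n] [DecidableEq n] [Fintype m] {ρ : Matrix n n ℂ}
    (hρ : IsDensity ρ) {V : Matrix n m ℂ} (hV : V * Vᴴ = 1) : IsDensity (Vᴴ * ρ * V) :=
  ⟨hρ.1.conjTranspose_mul_mul_same V, by rw [trace_mul_cycle, hV, Matrix.one_mul, hρ.2]⟩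

lemma isDensity_sum_smul {ι n : Type} [Fintype ι] [Fintype n] (p : ι → ℝ)
    (hp : ∀ i, 0 ≤ p i) (hp1 : ∑ i, p i = 1) {σ : ι → Matrix n n ℂ}
    (hσ : ∀ i, IsDensity (σ i)) : IsDensity (∑ i, (p i : ℂ) • σ i) := by
  refine ⟨posSemidef_sum _ fun i _ => (hσ i).1.smul (Complex.zero_le_real.2 (hp i)), ?_⟩
  simp [trace_sum, trace_smul, (hσ _).2, ← Complex.ofReal_sum, hp1]

lemma IsPOVM.postprocess {ι ι' n : Type} [Fintype ι] [Fintype ι'] [Fintype n] [DecidableEq n]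
    {N : ι → Matrix n n ℂ} (hN : IsPOVM N) (p : ι' → ι → ℝ) (hp : ∀ a i, 0 ≤ p a i)
    (hp1 : ∀ i, ∑ a, p a i = 1) : IsPOVM fun a => ∑ i, (p a i : ℂ) • N i := by
  refine ⟨fun a => posSemidef_sum _ fun i _ => (hN.1 i).smul (Complex.zero_le_real.2 (hp a i)),
    ?_⟩
  rw [Finset.sum_comm, ← hN.2]
  simp [← Finset.sum_smul, hp1]

lemma IsPOVM.sum_conj {κ : Type*} {ι n m : Type} [Fintype κ] [Fintype ι] [Fintype n]
    [DecidableEq n] [Fintype m] [DecidableEq m] {N : κ → ι → Matrix n n ℂ} (hN : ∀ k, IsPOVM (N k))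
    {V : κ → Matrix n m ℂ} (hV : ∑ k, (V k)ᴴ * V k = 1) :
    IsPOVM fun i => ∑ k, (V k)ᴴ * N k i * V k := by
  refine ⟨fun i => posSemidef_sum _ fun k _ => ((hN k).1 i).conjTranspose_mul_mul_same _, ?_⟩
  rw [Finset.sum_comm, ← hV]
  refine Finset.sum_congr rfl fun k _ => ?_
  rw [← Matrix.sum_mul, ← Matrix.mul_sum, (hN k).2, Matrix.mul_one]

def productStates (dA dB : ℕ) : Set (BMat dA dB) :=
  {σ | ∃ (ρA : Mat dA) (ρB : Mat dB), IsDensity ρA ∧ IsDensity ρB ∧ σ = ρA ⊗ₖ ρB}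

lemma sepState_iff_mem_convexHull {dA dB : ℕ} {ρ : BMat dA dB} :
    SepState ρ ↔ ρ ∈ convexHull ℝ (productStates dA dB) := by
  constructor
  · rintro ⟨n, p, ρA, ρB, hp, hp1, hA, hB, rfl⟩
    exact mem_convexHull_of_exists_fintype p (fun l => ρA l ⊗ₖ ρB l) hp hp1
      (fun l => ⟨ρA l, ρB l, hA l, hB l, rfl⟩) (by simp [Complex.coe_smul])
  · intro h
    obtain ⟨ι, _, w, z, hw, hw1, hz, rfl⟩ := mem_convexHull_iff_exists_fintype.1 h
    choose ρA ρB hA hB hz using hz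
    let e := (Fintype.equivFin ι).symm
    refine ⟨Fintype.card ι, w ∘ e, ρA ∘ e, ρB ∘ e, fun _ => hw _, by simpa [e.sum_comp] using hw1,
      fun _ => hA _, fun _ => hB _, ?_⟩
    simp only [Function.comp_apply, Complex.coe_smul, hz]
    exact (e.sum_comp fun i => w i • (ρA i ⊗ₖ ρB i)).symm

lemma sepState_sum_smul {ι : Type} [Fintype ι] {dA dB : ℕ} (p : ι → ℝ) (hp : ∀ i, 0 ≤ p i)
    (hp1 : ∑ i, p i = 1) {σ : ι → BMat dA dB} (hσ : ∀ i, SepState (σ i)) :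
    SepState (∑ i, (p i : ℂ) • σ i) := by
  simp only [Complex.coe_smul, sepState_iff_mem_convexHull] at hσ ⊢
  exact (convex_convexHull ℝ _).sum_mem (fun i _ => hp i) hp1 fun i _ => hσ i

lemma sepState_kronecker {dA dB : ℕ} {ρA : Mat dA} {ρB : Mat dB} (hA : IsDensity ρA)
    (hB : IsDensity ρB) : SepState (ρA ⊗ₖ ρB) :=
  sepState_iff_mem_convexHull.2 (subset_convexHull ℝ _ ⟨ρA, ρB, hA, hB, rfl⟩)

lemma SepState.conj_kronecker {dA dB dA₂ dB₂ : ℕ} {ρ : BMat dA dB} (hρ : SepState ρ)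
    {P : Matrix (Fin dA) (Fin dA₂) ℂ} {Q : Matrix (Fin dB) (Fin dB₂) ℂ} (hP : P * Pᴴ = 1)
    (hQ : Q * Qᴴ = 1) : SepState ((P ⊗ₖ Q)ᴴ * ρ * (P ⊗ₖ Q)) := by
  obtain ⟨n, p, ρA, ρB, hp, hp1, hA, hB, rfl⟩ := hρ
  refine ⟨n, p, fun l => Pᴴ * ρA l * P, fun l => Qᴴ * ρB l * Q, hp, hp1,
    fun l => (hA l).conj hP, fun l => (hB l).conj hQ, ?_⟩
  simp [Matrix.mul_sum, Matrix.sum_mul, conjTranspose_kronecker, mul_kronecker_mul]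

lemma isDensity_inv_card_smul_one {n : Type} [Fintype n] [DecidableEq n] [Nonempty n] :
    IsDensity ((Fintype.card n : ℂ)⁻¹ • (1 : Matrix n n ℂ)) := by
  refine ⟨PosSemidef.one.smul (by simp), ?_⟩
  simp [trace_smul, trace_one]

lemma IsDensity.exists_robustness_decomposition {dA dB : ℕ} {ρ : BMat dA dB}
    (hρ : IsDensity ρ) : ∃ r : ℝ, 0 ≤ r ∧ ∃ η σ : BMat dA dB,
      IsDensity η ∧ IsDensity σ ∧ SepState σ ∧ ρ + (r : ℂ) • η = ((1 + r : ℝ) : ℂ) • σ := by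
  have hne : Nonempty (Fin dA × Fin dB) := by
    by_contra h
    simpa [trace, not_nonempty_iff.1 h] using hρ.2
  have : Nonempty (Fin dA) := hne.map Prod.fst
  have : Nonempty (Fin dB) := hne.map Prod.snd
  set d : ℕ := Fintype.card (Fin dA × Fin dB)
  have hd : (d : ℂ) ≠ 0 := Nat.cast_ne_zero.2 Fintype.card_ne_zero
  set σ : BMat dA dB := (d : ℂ)⁻¹ • 1
  have hσ : σ = ((Fintype.card (Fin dA) : ℂ)⁻¹ • 1) ⊗ₖ ((Fintype.card (Fin dB) : ℂ)⁻¹ • 1) := by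
    simp [σ, d, smul_kronecker, kronecker_smul, smul_smul, mul_comm]
  have hσd : IsDensity σ := isDensity_inv_card_smul_one
  refine ⟨d, d.cast_nonneg, (d : ℂ)⁻¹ • (σ + (1 - ρ)), σ, ⟨?_, ?_⟩, hσd,
    hσ ▸ sepState_kronecker isDensity_inv_card_smul_one isDensity_inv_card_smul_one, ?_⟩
  · exact (hσd.1.add hρ.posSemidef_one_sub).smul (by simp)
  · rw [trace_smul, trace_add, trace_sub, trace_one, hσd.2, hρ.2, add_sub_cancel,
      smul_eq_mul, inv_mul_cancel₀ hd]
  · push_cast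
    rw [smul_smul, mul_inv_cancel₀ hd, one_smul, add_smul, one_smul, smul_smul,
      mul_inv_cancel₀ hd, one_smul]
    abel

lemma ptraceSnd_conj_kronecker_one {m m₂ n : Type} [Fintype m] [Fintype m₂] [Fintype n]
    [DecidableEq n] (C : Matrix m m₂ ℂ) (Z : Matrix (m × n) (m × n) ℂ) :
    ptraceSnd ((C ⊗ₖ (1 : Matrix n n ℂ))ᴴ * Z * (C ⊗ₖ (1 : Matrix n n ℂ))) =
      Cᴴ * ptraceSnd Z * C := by
  ext i j
  simp only [ptraceSnd, of_apply, mul_apply, conjTranspose_apply, kroneckerMap_apply, one_apply,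
    Fintype.sum_prod_type, mul_ite, mul_zero, mul_one, ite_mul, zero_mul, star_zero,
    apply_ite star, Finset.sum_ite_eq', Finset.mem_univ, if_true, Finset.mul_sum, Finset.sum_mul]
  rw [Finset.sum_comm]
  exact Finset.sum_congr rfl fun _ _ => Finset.sum_comm

lemma ptraceSnd_one_kronecker_mul_comm {m n n₂ : Type} [Fintype m] [DecidableEq m] [Fintype n]
    [Fintype n₂] (C : Matrix n₂ n ℂ) (Z : Matrix (m × n) (m × n₂) ℂ) :
    ptraceSnd (((1 : Matrix m m ℂ) ⊗ₖ C) * Z) = ptraceSnd (Z * ((1 : Matrix m m ℂ) ⊗ₖ C)) := by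
  ext i j
  simp only [ptraceSnd, of_apply, mul_apply, kroneckerMap_apply, one_apply,
    Fintype.sum_prod_type, ite_mul, zero_mul, one_mul, mul_ite, mul_zero]
  conv_lhs => rw [Finset.sum_comm]
  conv_rhs => rw [Finset.sum_comm]
  simp only [Finset.sum_ite_irrel, Finset.sum_const_zero, Finset.sum_ite_eq, Finset.sum_ite_eq',
    Finset.mem_univ, if_true]
  rw [Finset.sum_comm]
  exact Finset.sum_congr rfl fun _ _ => Finset.sum_congr rfl fun _ _ => mul_comm _ _

lemma ptraceSnd_conj_kronecker {m m₂ n n₂ : Type} [Fintype m] [DecidableEq m] [Fintype m₂]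
    [DecidableEq m₂] [Fintype n] [Fintype n₂] [DecidableEq n₂]
    (A : Matrix m m₂ ℂ) (B : Matrix n n₂ ℂ) (T : Matrix (m × n) (m × n) ℂ) (ρ : Matrix n₂ n₂ ℂ) :
    ptraceSnd ((A ⊗ₖ B)ᴴ * T * (A ⊗ₖ B) * ((1 : Matrix m₂ m₂ ℂ) ⊗ₖ ρ)) =
      Aᴴ * ptraceSnd (T * ((1 : Matrix m m ℂ) ⊗ₖ (B * ρ * Bᴴ))) * A := by
  have hAB : (A ⊗ₖ B)ᴴ = (A ⊗ₖ (1 : Matrix n₂ n₂ ℂ))ᴴ * ((1 : Matrix m m ℂ) ⊗ₖ Bᴴ) := by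
    simp [conjTranspose_kronecker, ← mul_kronecker_mul]
  have hρ : (A ⊗ₖ B) * ((1 : Matrix m₂ m₂ ℂ) ⊗ₖ ρ) =
      ((1 : Matrix m m ℂ) ⊗ₖ (B * ρ)) * (A ⊗ₖ (1 : Matrix n₂ n₂ ℂ)) := by
    simp [← mul_kronecker_mul]
  have hsplit : (A ⊗ₖ B)ᴴ * T * (A ⊗ₖ B) * ((1 : Matrix m₂ m₂ ℂ) ⊗ₖ ρ) =
      (A ⊗ₖ (1 : Matrix n₂ n₂ ℂ))ᴴ * (((1 : Matrix m m ℂ) ⊗ₖ Bᴴ) * T *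
        ((1 : Matrix m m ℂ) ⊗ₖ (B * ρ))) * (A ⊗ₖ (1 : Matrix n₂ n₂ ℂ)) := by
    rw [Matrix.mul_assoc _ (A ⊗ₖ B), hρ, hAB]
    simp only [Matrix.mul_assoc]
  rw [hsplit, ptraceSnd_conj_kronecker_one, Matrix.mul_assoc _ T,
    ptraceSnd_one_kronecker_mul_comm, Matrix.mul_assoc T, ← mul_kronecker_mul, Matrix.one_mul]

def tensorReorder (α β γ δ : Type*) : (α × β) × (γ × δ) ≃ (α × γ) × (δ × β) where
  toFun x := ((x.1.1, x.2.1), (x.2.2, x.1.2))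
  invFun y := ((y.1.1, y.2.2), (y.1.2, y.2.1))
  left_inv _ := rfl
  right_inv _ := rfl

section DistMeas

variable {dA dA' dB' dB : ℕ}

lemma distMeas_eq_ptraceSnd (Ma : Matrix (Fin dA × Fin dA') (Fin dA × Fin dA') ℂ)
    (Mb : Matrix (Fin dB' × Fin dB) (Fin dB' × Fin dB) ℂ) (ρ : BMat dA' dB') :
    distMeas Ma Mb ρ = ptraceSnd ((Ma ⊗ₖ Mb).submatrix (tensorReorder _ _ _ _)
      (tensorReorder _ _ _ _) * ((1 : BMat dA dB) ⊗ₖ ρ)) := by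
  ext ⟨p, q⟩ ⟨r, s⟩
  simp only [distMeas, ptraceSnd, of_apply, mul_apply, submatrix_apply, tensorReorder,
    Equiv.coe_fn_mk, kroneckerMap_apply, one_apply, Fintype.sum_prod_type, mul_ite, mul_zero,
    ite_mul, zero_mul, Finset.sum_ite_eq', Finset.mem_univ, if_true, Finset.sum_ite_irrel,
    Finset.sum_const_zero, one_mul]

lemma kronecker_submatrix_tensorReorder {α β γ δ α₂ β₂ γ₂ δ₂ : Type*} (K : Matrix α α₂ ℂ)
    (L : Matrix β β₂ ℂ) (P : Matrix γ γ₂ ℂ) (Q : Matrix δ δ₂ ℂ) :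
    ((K ⊗ₖ P) ⊗ₖ (Q ⊗ₖ L)).submatrix (tensorReorder α β γ δ) (tensorReorder α₂ β₂ γ₂ δ₂) =
      (K ⊗ₖ L) ⊗ₖ (P ⊗ₖ Q) := by
  ext
  simp only [submatrix_apply, tensorReorder, Equiv.coe_fn_mk, kroneckerMap_apply]
  ring

lemma distMeas_conj {dA₂ dB₂ : ℕ} (Ma : Matrix (Fin dA × Fin dA') (Fin dA × Fin dA') ℂ)
    (Mb : Matrix (Fin dB' × Fin dB) (Fin dB' × Fin dB) ℂ) (ρ : BMat dA₂ dB₂) (K : Mat dA)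
    (L : Mat dB) (P : Matrix (Fin dA') (Fin dA₂) ℂ) (Q : Matrix (Fin dB') (Fin dB₂) ℂ) :
    distMeas ((K ⊗ₖ P)ᴴ * Ma * (K ⊗ₖ P)) ((Q ⊗ₖ L)ᴴ * Mb * (Q ⊗ₖ L)) ρ =
      (K ⊗ₖ L)ᴴ * distMeas Ma Mb ((P ⊗ₖ Q) * ρ * (P ⊗ₖ Q)ᴴ) * (K ⊗ₖ L) := by
  rw [distMeas_eq_ptraceSnd, distMeas_eq_ptraceSnd, ← ptraceSnd_conj_kronecker,
    mul_kronecker_mul, mul_kronecker_mul, ← conjTranspose_kronecker,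
    ← submatrix_mul_equiv _ _ _ (tensorReorder _ _ _ _),
    ← submatrix_mul_equiv _ _ _ (tensorReorder _ _ _ _), ← conjTranspose_submatrix,
    kronecker_submatrix_tensorReorder]

lemma distMeas_sum_left {ι : Type*} (s : Finset ι)
    (Ma : ι → Matrix (Fin dA × Fin dA') (Fin dA × Fin dA') ℂ)
    (Mb : Matrix (Fin dB' × Fin dB) (Fin dB' × Fin dB) ℂ) (ρ : BMat dA' dB') :
    distMeas (∑ i ∈ s, Ma i) Mb ρ = ∑ i ∈ s, distMeas (Ma i) Mb ρ :=
  map_sum (AddMonoidHom.mk' (distMeas · Mb ρ) fun _ _ => by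
    ext; simp [distMeas, add_mul, Finset.sum_add_distrib]) Ma s

lemma distMeas_sum_right {ι : Type*} (s : Finset ι)
    (Ma : Matrix (Fin dA × Fin dA') (Fin dA × Fin dA') ℂ)
    (Mb : ι → Matrix (Fin dB' × Fin dB) (Fin dB' × Fin dB) ℂ) (ρ : BMat dA' dB') :
    distMeas Ma (∑ i ∈ s, Mb i) ρ = ∑ i ∈ s, distMeas Ma (Mb i) ρ :=
  map_sum (AddMonoidHom.mk' (distMeas Ma · ρ) fun _ _ => by
    ext; simp [distMeas, add_mul, mul_add, Finset.sum_add_distrib]) Mb s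

lemma distMeas_add_state (Ma : Matrix (Fin dA × Fin dA') (Fin dA × Fin dA') ℂ)
    (Mb : Matrix (Fin dB' × Fin dB) (Fin dB' × Fin dB) ℂ) (ρ σ : BMat dA' dB') :
    distMeas Ma Mb (ρ + σ) = distMeas Ma Mb ρ + distMeas Ma Mb σ := by
  ext; simp [distMeas, mul_add, Finset.sum_add_distrib]

lemma distMeas_smul_left (c : ℂ) (Ma : Matrix (Fin dA × Fin dA') (Fin dA × Fin dA') ℂ)
    (Mb : Matrix (Fin dB' × Fin dB) (Fin dB' × Fin dB) ℂ) (ρ : BMat dA' dB') :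
    distMeas (c • Ma) Mb ρ = c • distMeas Ma Mb ρ := by
  ext; simp [distMeas, Finset.mul_sum, mul_assoc]

lemma distMeas_smul_right (c : ℂ) (Ma : Matrix (Fin dA × Fin dA') (Fin dA × Fin dA') ℂ)
    (Mb : Matrix (Fin dB' × Fin dB) (Fin dB' × Fin dB) ℂ) (ρ : BMat dA' dB') :
    distMeas Ma (c • Mb) ρ = c • distMeas Ma Mb ρ := by
  ext; simp [distMeas, Finset.mul_sum, mul_assoc, mul_left_comm]

lemma distMeas_smul_state (c : ℂ) (Ma : Matrix (Fin dA × Fin dA') (Fin dA × Fin dA') ℂ)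
    (Mb : Matrix (Fin dB' × Fin dB) (Fin dB' × Fin dB) ℂ) (ρ : BMat dA' dB') :
    distMeas Ma Mb (c • ρ) = c • distMeas Ma Mb ρ := by
  ext; simp [distMeas, Finset.mul_sum, mul_left_comm]

lemma distMeas_zero_state (Ma : Matrix (Fin dA × Fin dA') (Fin dA × Fin dA') ℂ)
    (Mb : Matrix (Fin dB' × Fin dB) (Fin dB' × Fin dB) ℂ) :
    distMeas Ma Mb (0 : BMat dA' dB') = 0 := by
  ext; simp [distMeas]

end DistMeas

lemma sum_kronecker {κ l m n p α : Type*} [Fintype κ] [NonUnitalNonAssocRing α]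
    (A : κ → Matrix l m α) (B : Matrix n p α) :
    (∑ k, A k) ⊗ₖ B = ∑ k, A k ⊗ₖ B :=
  map_sum (AddMonoidHom.mk' (fun X : Matrix l m α => X ⊗ₖ B) fun _ _ => add_kronecker _ _ _) A _

lemma kronecker_sum {κ l m n p α : Type*} [Fintype κ] [NonUnitalNonAssocRing α]
    (A : Matrix l m α) (B : κ → Matrix n p α) :
    A ⊗ₖ (∑ k, B k) = ∑ k, A ⊗ₖ B k :=
  map_sum (AddMonoidHom.mk' (fun X : Matrix n p α => A ⊗ₖ X) fun _ _ => kronecker_add _ _ _) B _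

lemma sum_conjTranspose_kronecker_mul_kronecker_one {κ m n p : Type*} [Fintype κ] [Fintype m]
    [Fintype p] [DecidableEq p] (V : κ → Matrix m n ℂ) :
    ∑ k, (V k ⊗ₖ (1 : Matrix p p ℂ))ᴴ * (V k ⊗ₖ (1 : Matrix p p ℂ)) =
      (∑ k, (V k)ᴴ * V k) ⊗ₖ (1 : Matrix p p ℂ) := by
  simp [conjTranspose_kronecker, ← mul_kronecker_mul, sum_kronecker]

lemma sum_conjTranspose_one_kronecker_mul_one_kronecker {κ m n p : Type*} [Fintype κ] [Fintype m]
    [Fintype p] [DecidableEq p] (V : κ → Matrix m n ℂ) :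
    ∑ k, ((1 : Matrix p p ℂ) ⊗ₖ V k)ᴴ * ((1 : Matrix p p ℂ) ⊗ₖ V k) =
      (1 : Matrix p p ℂ) ⊗ₖ (∑ k, (V k)ᴴ * V k) := by
  simp [conjTranspose_kronecker, ← mul_kronecker_mul, kronecker_sum]

def blockEmb (n d : ℕ) (l : Fin n) : Matrix (Fin d) (Fin (n * d)) ℂ :=
  of fun k u => if finProdFinEquiv (l, k) = u then 1 else 0

lemma blockEmb_mul_conjTranspose (n d : ℕ) (l l' : Fin n) :
    blockEmb n d l * (blockEmb n d l')ᴴ = if l = l' then 1 else 0 := by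
  ext k k'
  by_cases h : l = l' <;>
    simp [blockEmb, mul_apply, one_apply, h, apply_ite star, Prod.ext_iff]

lemma sum_conjTranspose_mul_blockEmb (n d : ℕ) :
    ∑ l, (blockEmb n d l)ᴴ * blockEmb n d l = 1 := by
  ext u u'
  simp only [blockEmb, Matrix.sum_apply, mul_apply, conjTranspose_apply, of_apply, apply_ite star,
    star_one, star_zero, mul_ite, ite_mul, one_mul, zero_mul, mul_zero, ← Fintype.sum_prod_type']
  rw [(finProdFinEquiv).sum_comp (fun v => if v = u' then if v = u then (1 : ℂ) else 0 else 0)]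
  simp [one_apply, eq_comm]

section LocalProcessing

variable {dA dA' dB' dB : ℕ} {ι ι' : Type} {κ : Type*} [Fintype ι] [Fintype κ]

def localPOVMLeft (K : κ → Mat dA) (p : ι' → ι → ℝ)
    (N : ι → Matrix (Fin dA × Fin dA') (Fin dA × Fin dA') ℂ) (a : ι') :
    Matrix (Fin dA × Fin dA') (Fin dA × Fin dA') ℂ :=
  ∑ i, (p a i : ℂ) • ∑ s, (K s ⊗ₖ (1 : Mat dA'))ᴴ * N i * (K s ⊗ₖ (1 : Mat dA'))

def localPOVMRight (L : κ → Mat dB) (p : ι' → ι → ℝ)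
    (N : ι → Matrix (Fin dB' × Fin dB) (Fin dB' × Fin dB) ℂ) (b : ι') :
    Matrix (Fin dB' × Fin dB) (Fin dB' × Fin dB) ℂ :=
  ∑ j, (p b j : ℂ) • ∑ t, ((1 : Mat dB') ⊗ₖ L t)ᴴ * N j * ((1 : Mat dB') ⊗ₖ L t)

lemma IsPOVM.localPOVMLeft [Fintype ι'] {K : κ → Mat dA} {p : ι' → ι → ℝ}
    {N : ι → Matrix (Fin dA × Fin dA') (Fin dA × Fin dA') ℂ} (hN : IsPOVM N)
    (hK : ∑ s, (K s)ᴴ * K s = 1) (hp : ∀ a i, 0 ≤ p a i) (hp1 : ∀ i, ∑ a, p a i = 1) :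
    IsPOVM (localPOVMLeft K p N) :=
  (IsPOVM.sum_conj (fun _ => hN) (by
    rw [sum_conjTranspose_kronecker_mul_kronecker_one, hK, one_kronecker_one])).postprocess
    p hp hp1

lemma IsPOVM.localPOVMRight [Fintype ι'] {L : κ → Mat dB} {p : ι' → ι → ℝ}
    {N : ι → Matrix (Fin dB' × Fin dB) (Fin dB' × Fin dB) ℂ} (hN : IsPOVM N)
    (hL : ∑ t, (L t)ᴴ * L t = 1) (hp : ∀ b j, 0 ≤ p b j) (hp1 : ∀ j, ∑ b, p b j = 1) :
    IsPOVM (localPOVMRight L p N) :=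
  (IsPOVM.sum_conj (fun _ => hN) (by
    rw [sum_conjTranspose_one_kronecker_mul_one_kronecker, hL, one_kronecker_one])).postprocess
    p hp hp1

lemma distMeas_localPOVM {ι₂ ι₂' : Type} {κ₂ : Type*} [Fintype ι₂] [Fintype κ₂]
    (K : κ → Mat dA) (L : κ₂ → Mat dB) (p : ι' → ι → ℝ) (q : ι₂' → ι₂ → ℝ)
    (Na : ι → Matrix (Fin dA × Fin dA') (Fin dA × Fin dA') ℂ)
    (Nb : ι₂ → Matrix (Fin dB' × Fin dB) (Fin dB' × Fin dB) ℂ) (ρ : BMat dA' dB') (a : ι')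
    (b : ι₂') :
    distMeas (localPOVMLeft K p Na a) (localPOVMRight L q Nb b) ρ =
      ∑ i, ∑ j, ((p a i : ℂ) * q b j) •
        ∑ s, ∑ t, (K s ⊗ₖ L t)ᴴ * distMeas (Na i) (Nb j) ρ * (K s ⊗ₖ L t) := by
  rw [localPOVMLeft, distMeas_sum_left]
  refine Finset.sum_congr rfl fun i _ => ?_
  rw [distMeas_smul_left, localPOVMRight, distMeas_sum_right, Finset.smul_sum]
  refine Finset.sum_congr rfl fun j _ => ?_
  simp only [distMeas_smul_right, distMeas_sum_left, distMeas_sum_right, distMeas_conj,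
    one_kronecker_one, conjTranspose_one, Matrix.one_mul, Matrix.mul_one, smul_smul]
  rw [Finset.sum_comm]

end LocalProcessing

section Blocks

variable {dA dA' dB' dB n : ℕ} {ι ι' : Type}

def blockPOVMLeft (A : Fin n → ι → Matrix (Fin dA × Fin dA') (Fin dA × Fin dA') ℂ) (a : ι) :
    Matrix (Fin dA × Fin (n * dA')) (Fin dA × Fin (n * dA')) ℂ :=
  ∑ l, ((1 : Mat dA) ⊗ₖ blockEmb n dA' l)ᴴ * A l a * ((1 : Mat dA) ⊗ₖ blockEmb n dA' l)

def blockPOVMRight (B : Fin n → ι' → Matrix (Fin dB' × Fin dB) (Fin dB' × Fin dB) ℂ) (b : ι') :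
    Matrix (Fin (n * dB') × Fin dB) (Fin (n * dB') × Fin dB) ℂ :=
  ∑ l, (blockEmb n dB' l ⊗ₖ (1 : Mat dB))ᴴ * B l b * (blockEmb n dB' l ⊗ₖ (1 : Mat dB))

def blockState (p : Fin n → ℝ) (ρ : BMat dA' dB') : BMat (n * dA') (n * dB') :=
  ∑ l, (p l : ℂ) • ((blockEmb n dA' l ⊗ₖ blockEmb n dB' l)ᴴ * ρ *
    (blockEmb n dA' l ⊗ₖ blockEmb n dB' l))

lemma IsPOVM.blockPOVMLeft [Fintype ι]
    {A : Fin n → ι → Matrix (Fin dA × Fin dA') (Fin dA × Fin dA') ℂ} (hA : ∀ l, IsPOVM (A l)) :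
    IsPOVM (blockPOVMLeft A) :=
  IsPOVM.sum_conj hA (by
    rw [sum_conjTranspose_one_kronecker_mul_one_kronecker, sum_conjTranspose_mul_blockEmb,
      one_kronecker_one])

lemma IsPOVM.blockPOVMRight [Fintype ι']
    {B : Fin n → ι' → Matrix (Fin dB' × Fin dB) (Fin dB' × Fin dB) ℂ} (hB : ∀ l, IsPOVM (B l)) :
    IsPOVM (blockPOVMRight B) :=
  IsPOVM.sum_conj hB (by
    rw [sum_conjTranspose_kronecker_mul_kronecker_one, sum_conjTranspose_mul_blockEmb,
      one_kronecker_one])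

lemma blockEmb_kronecker_mul_conjTranspose (l l' m : Fin n) :
    (blockEmb n dA' l ⊗ₖ blockEmb n dB' l') * (blockEmb n dA' m ⊗ₖ blockEmb n dB' m)ᴴ =
      if l = m ∧ l' = m then 1 else 0 := by
  rw [conjTranspose_kronecker, ← mul_kronecker_mul, blockEmb_mul_conjTranspose,
    blockEmb_mul_conjTranspose]
  split_ifs <;> simp_all

lemma IsDensity.blockState {ρ : BMat dA' dB'} (hρ : IsDensity ρ) {p : Fin n → ℝ}
    (hp : ∀ l, 0 ≤ p l) (hp1 : ∑ l, p l = 1) : IsDensity (blockState p ρ) :=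
  isDensity_sum_smul p hp hp1 fun l => hρ.conj (by
    simpa using blockEmb_kronecker_mul_conjTranspose (dA' := dA') (dB' := dB') l l l)

lemma SepState.blockState {ρ : BMat dA' dB'} (hρ : SepState ρ) {p : Fin n → ℝ}
    (hp : ∀ l, 0 ≤ p l) (hp1 : ∑ l, p l = 1) : SepState (blockState p ρ) :=
  sepState_sum_smul p hp hp1 fun l =>
    hρ.conj_kronecker (by simp [blockEmb_mul_conjTranspose]) (by simp [blockEmb_mul_conjTranspose])

lemma blockEmb_kronecker_conj_blockState (p : Fin n → ℝ) (ρ : BMat dA' dB') (l l' : Fin n) :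
    (blockEmb n dA' l ⊗ₖ blockEmb n dB' l') * blockState p ρ *
      (blockEmb n dA' l ⊗ₖ blockEmb n dB' l')ᴴ = if l = l' then (p l : ℂ) • ρ else 0 := by
  set G := blockEmb n dA' l ⊗ₖ blockEmb n dB' l'
  have hassoc : ∀ m, G * ((blockEmb n dA' m ⊗ₖ blockEmb n dB' m)ᴴ * ρ *
      (blockEmb n dA' m ⊗ₖ blockEmb n dB' m)) * Gᴴ =
      (G * (blockEmb n dA' m ⊗ₖ blockEmb n dB' m)ᴴ) * ρ *
        (G * (blockEmb n dA' m ⊗ₖ blockEmb n dB' m)ᴴ)ᴴ := by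
    simp [Matrix.mul_assoc, conjTranspose_mul]
  simp only [blockState, Matrix.mul_sum, Matrix.sum_mul, Matrix.mul_smul, Matrix.smul_mul,
    hassoc, G, blockEmb_kronecker_mul_conjTranspose]
  by_cases h : l = l'
  · subst h; simp
  · rw [if_neg h]
    refine Finset.sum_eq_zero fun m _ => ?_
    rw [if_neg fun hm => h (hm.1.trans hm.2.symm)]
    simp

lemma distMeas_blockState (A : Fin n → ι → Matrix (Fin dA × Fin dA') (Fin dA × Fin dA') ℂ)
    (B : Fin n → ι' → Matrix (Fin dB' × Fin dB) (Fin dB' × Fin dB) ℂ) (p : Fin n → ℝ)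
    (ρ : BMat dA' dB') (a : ι) (b : ι') :
    distMeas (blockPOVMLeft A a) (blockPOVMRight B b) (blockState p ρ) =
      ∑ l, (p l : ℂ) • distMeas (A l a) (B l b) ρ := by
  simp only [blockPOVMLeft, blockPOVMRight, distMeas_sum_left, distMeas_sum_right, distMeas_conj,
    blockEmb_kronecker_conj_blockState, one_kronecker_one, conjTranspose_one, Matrix.one_mul,
    Matrix.mul_one, apply_ite, distMeas_smul_state, distMeas_zero_state, Finset.sum_ite_eq',
    Finset.mem_univ, if_true]

end Blocks

structure QuantumSimulation (dA dB oA oB oA' oB' : ℕ) where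
  nL : ℕ
  pL : Fin nL → ℝ
  pA : Fin oA' → Fin oA → Fin nL → ℝ
  pB : Fin oB' → Fin oB → Fin nL → ℝ
  kE : Fin nL → ℕ
  KE : (l : Fin nL) → Fin (kE l) → Mat dA
  kN : Fin nL → ℕ
  KN : (l : Fin nL) → Fin (kN l) → Mat dB
  pL_nonneg : ∀ l, 0 ≤ pL l
  sum_pL : ∑ l, pL l = 1
  pA_nonneg : ∀ a i l, 0 ≤ pA a i l
  sum_pA : ∀ i l, ∑ a, pA a i l = 1
  pB_nonneg : ∀ b j l, 0 ≤ pB b j l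
  sum_pB : ∀ j l, ∑ b, pB b j l = 1
  sum_KE : ∀ l, ∑ s, (KE l s)ᴴ * KE l s = 1
  sum_KN : ∀ l, ∑ t, (KN l t)ᴴ * KN l t = 1

namespace QuantumSimulation

variable {dA dB oA oB oA' oB' dA' dB' : ℕ} (S : QuantumSimulation dA dB oA oB oA' oB')

def map : (Fin oA → Fin oB → BMat dA dB) →ₗ[ℂ] (Fin oA' → Fin oB' → BMat dA dB) where
  toFun M a b := ∑ l, ∑ i, ∑ j, ((S.pL l * S.pA a i l * S.pB b j l : ℝ) : ℂ) •
    ∑ s, ∑ t, (S.KE l s ⊗ₖ S.KN l t)ᴴ * M i j * (S.KE l s ⊗ₖ S.KN l t)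
  map_add' M N := by
    ext; simp [Matrix.mul_add, Matrix.add_mul, Finset.sum_add_distrib]
  map_smul' c M := by
    funext a b
    simp [Finset.smul_sum, smul_comm _ c]

def povmLeft (Na : Fin oA → Matrix (Fin dA × Fin dA') (Fin dA × Fin dA') ℂ) :
    Fin oA' → Matrix (Fin dA × Fin (S.nL * dA')) (Fin dA × Fin (S.nL * dA')) ℂ :=
  blockPOVMLeft fun l => localPOVMLeft (S.KE l) (fun a i => S.pA a i l) Na

def povmRight (Nb : Fin oB → Matrix (Fin dB' × Fin dB) (Fin dB' × Fin dB) ℂ) :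
    Fin oB' → Matrix (Fin (S.nL * dB') × Fin dB) (Fin (S.nL * dB') × Fin dB) ℂ :=
  blockPOVMRight fun l => localPOVMRight (S.KN l) (fun b j => S.pB b j l) Nb

lemma isPOVM_povmLeft {Na : Fin oA → Matrix (Fin dA × Fin dA') (Fin dA × Fin dA') ℂ}
    (hNa : IsPOVM Na) : IsPOVM (S.povmLeft Na) :=
  IsPOVM.blockPOVMLeft fun l =>
    hNa.localPOVMLeft (S.sum_KE l) (fun a i => S.pA_nonneg a i l) (fun i => S.sum_pA i l)

lemma isPOVM_povmRight {Nb : Fin oB → Matrix (Fin dB' × Fin dB) (Fin dB' × Fin dB) ℂ}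
    (hNb : IsPOVM Nb) : IsPOVM (S.povmRight Nb) :=
  IsPOVM.blockPOVMRight fun l =>
    hNb.localPOVMRight (S.sum_KN l) (fun b j => S.pB_nonneg b j l) (fun j => S.sum_pB j l)

lemma map_distMeas (Na : Fin oA → Matrix (Fin dA × Fin dA') (Fin dA × Fin dA') ℂ)
    (Nb : Fin oB → Matrix (Fin dB' × Fin dB) (Fin dB' × Fin dB) ℂ) (ρ : BMat dA' dB') :
    S.map (fun i j => distMeas (Na i) (Nb j) ρ) =
      fun a b => distMeas (S.povmLeft Na a) (S.povmRight Nb b) (blockState S.pL ρ) := by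
  funext a b
  rw [povmLeft, povmRight, distMeas_blockState, map, LinearMap.coe_mk, AddHom.coe_mk]
  refine Finset.sum_congr rfl fun l _ => ?_
  rw [distMeas_localPOVM]
  simp only [Finset.smul_sum, smul_smul]
  push_cast [mul_assoc]
  rfl

lemma _root_.MemRBN.map {M : Fin oA → Fin oB → BMat dA dB} (hM : MemRBN M) :
    MemRBN (S.map M) := by
  obtain ⟨dA', dB', Na, Nb, ρ, hNa, hNb, hρ, hM⟩ := hM
  rw [funext₂ hM, S.map_distMeas]
  exact ⟨_, _, _, _, _, S.isPOVM_povmLeft hNa, S.isPOVM_povmRight hNb,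
    hρ.blockState S.pL_nonneg S.sum_pL, fun _ _ => rfl⟩

lemma _root_.MemFBN.map {M : Fin oA → Fin oB → BMat dA dB} (hM : MemFBN M) :
    MemFBN (S.map M) := by
  obtain ⟨dA', dB', Na, Nb, ρ, hNa, hNb, hρ, hsep, hM⟩ := hM
  rw [funext₂ hM, S.map_distMeas]
  exact ⟨_, _, _, _, _, S.isPOVM_povmLeft hNa, S.isPOVM_povmRight hNb,
    hρ.blockState S.pL_nonneg S.sum_pL, hsep.blockState S.pL_nonneg S.sum_pL, fun _ _ => rfl⟩

end QuantumSimulation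

lemma Simulates.exists_eq_map {dA dB oA oB oA' oB' : ℕ} {M : Fin oA → Fin oB → BMat dA dB}
    {M' : Fin oA' → Fin oB' → BMat dA dB} (h : Simulates M M') :
    ∃ S : QuantumSimulation dA dB oA oB oA' oB', M' = S.map M := by
  obtain ⟨nL, pL, pA, pB, kE, KE, kN, KN, hpL, hpL1, hpA, hpA1, hpB, hpB1, hKE, hKN, hM'⟩ := h
  exact ⟨⟨nL, pL, pA, pB, kE, KE, kN, KN, hpL, hpL1, hpA, hpA1, hpB, hpB1, hKE, hKN⟩,
    funext₂ hM'⟩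

def robnFeasible {dA dB oA oB : ℕ} (M : Fin oA → Fin oB → BMat dA dB) : Set ℝ :=
  { r : ℝ | 0 ≤ r ∧ ∃ (N O : Fin oA → Fin oB → BMat dA dB),
    MemRBN N ∧ MemFBN O ∧
    ∀ a b, M a b + (r : ℂ) • N a b = ((1 + r : ℝ) : ℂ) • O a b }

lemma robnFeasible_nonempty {dA dB oA oB : ℕ} {M : Fin oA → Fin oB → BMat dA dB}
    (hM : MemRBN M) : (robnFeasible M).Nonempty := by
  obtain ⟨dA', dB', Ma, Mb, ρ, hMa, hMb, hρ, hM⟩ := hM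
  obtain ⟨r, hr, η, σ, hη, hσ, hsep, hdec⟩ := hρ.exists_robustness_decomposition
  refine ⟨r, hr, fun a b => distMeas (Ma a) (Mb b) η, fun a b => distMeas (Ma a) (Mb b) σ,
    ⟨dA', dB', Ma, Mb, η, hMa, hMb, hη, fun _ _ => rfl⟩,
    ⟨dA', dB', Ma, Mb, σ, hMa, hMb, hσ, hsep, fun _ _ => rfl⟩, fun a b => ?_⟩
  rw [hM, ← distMeas_smul_state, ← distMeas_add_state, hdec, distMeas_smul_state]

lemma robnFeasible_subset_of_simulates {dA dB oA oB oA' oB' : ℕ}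
    {M : Fin oA → Fin oB → BMat dA dB}
    {M' : Fin oA' → Fin oB' → BMat dA dB} (hsim : Simulates M M') :
    robnFeasible M ⊆ robnFeasible M' := by
  obtain ⟨S, rfl⟩ := hsim.exists_eq_map
  rintro r ⟨hr, N, O, hN, hO, hMNO⟩
  have h := congrArg S.map (funext₂ hMNO : M + (r : ℂ) • N = ((1 + r : ℝ) : ℂ) • O)
  rw [map_add, map_smul, map_smul] at h
  exact ⟨hr, S.map N, S.map O, hN.map S, hO.map S, fun a b => congrFun₂ h a b⟩

theorem robn_monotone_general {dA dB oA oB oA' oB' : ℕ}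
    (M : Fin oA → Fin oB → BMat dA dB) (M' : Fin oA' → Fin oB' → BMat dA dB)
    (hM : MemRBN M) (hsim : Simulates M M') :
    RoBN M' ≤ RoBN M :=
  csInf_le_csInf ⟨0, fun _ hr => hr.1⟩ (robnFeasible_nonempty hM)
    (robnFeasible_subset_of_simulates hsim)

/-- RoBN is monotone under quantum simulation: if `M ≻_q M'` then
`RoBN(M') ≤ RoBN(M)`. -/
theorem robn_monotone {dA dB oA oB oA' oB' : ℕ}
    (M : Fin oA → Fin oB → BMat dA dB) (M' : Fin oA' → Fin oB' → BMat dA dB)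
    (hM : MemRBN M) (hM' : MemRBN M') (hsim : Simulates M M') :
    RoBN M' ≤ RoBN M :=
  robn_monotone_general M M' hM hsim
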